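/- Let H be a real Hilbert space, A : D(A) ⊆ H → H self-adjoint with finite negative signature, and let V₁, …, V_{m} ∈ D(A) and continuous linear functionals φ₁, …, φ_m on H satisfy: the matrix C with entries C_{ij} = −⟨V_j, A V_i⟩ is invertible, φ_i(V_j) = C_{ij} up to sign conventions making H = Span(V₁,…,V_m) ⊕ T, where T = ⋂_i ker φ_i, and ⟨U, A V_i⟩ = 0 for all U ∈ T and each i. Then neg(A) = neg(A|_T) + neg(−C), where neg denotes negative signature of the associated quadratic forms. -/

import Mathlib

open scoped RealInnerProductSpace
open Matrix

/-- `n` is the negative signature of the quadratic form `f`: the maximal dimension of a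
subspace on which `f` is negative definite. -/
def IsNegSig {V : Type*} [AddCommGroup V] [Module ℝ V] (f : V → ℝ) (n : ℕ) : Prop :=
  (∃ W : Submodule ℝ V, Module.finrank ℝ W = n ∧ ∀ v ∈ W, v ≠ 0 → f v < 0) ∧
  ∀ m : ℕ, (∃ W : Submodule ℝ V, Module.finrank ℝ W = m ∧ ∀ v ∈ W, v ≠ 0 → f v < 0) → m ≤ n

/-!
Write `U = v + t` with `v ∈ span V` and `t ∈ T`. Because `T` is `A`-orthogonal to the `Vᵢ` and `A`
is symmetric, `⟪A U, U⟫ = ⟪A v, v⟫ + ⟪A t, t⟫`, and negative indices add over such an orthogonal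
direct sum: negative subspaces of the summands add up to one of the total space, and conversely a
negative subspace `W` of the total space, after diagonalising the `span V`-part of the form on `W`,
embeds into the two summands piece by piece. Finally the form on `span V` pulls back along the
surjection `x ↦ ∑ xᵢ Vᵢ` to `x ⬝ᵥ (-C) x`, and pulling back along a surjection keeps the negative
index.
-/

open Module LinearMap.BilinForm

section NegativeIndex

variable {E F : Type*} [AddCommGroup E] [Module ℝ E] [AddCommGroup F] [Module ℝ F]

def IsNegDefOn (f : E → ℝ) (W : Submodule ℝ E) : Prop :=
  ∀ v ∈ W, v ≠ 0 → f v < 0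

theorem IsNegSig.unique {f : E → ℝ} {a b : ℕ} (ha : IsNegSig f a) (hb : IsNegSig f b) :
    a = b :=
  le_antisymm (hb.2 a ha.1) (ha.2 b hb.1)

theorem IsNegSig.finrank_le {f : E → ℝ} {n : ℕ} (h : IsNegSig f n) {W : Submodule ℝ E}
    (hW : IsNegDefOn f W) : finrank ℝ W ≤ n :=
  h.2 _ ⟨W, rfl, hW⟩

theorem IsNegSig.exists_finiteDimensional {f : E → ℝ} {n : ℕ} (h : IsNegSig f n) :
    ∃ W : Submodule ℝ E, FiniteDimensional ℝ W ∧ finrank ℝ W = n ∧ IsNegDefOn f W := by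
  obtain ⟨W, hWn, hW : IsNegDefOn f W⟩ := h.1
  by_cases hfin : FiniteDimensional ℝ W
  · exact ⟨W, hfin, hWn, hW⟩
  -- an infinite-dimensional witness has `finrank` zero, so `⊥` witnesses the same index
  · refine ⟨⊥, inferInstance, ?_, fun v hv hv0 => absurd ((Submodule.mem_bot ℝ).1 hv) hv0⟩
    rw [finrank_bot, ← hWn, finrank_of_not_finite hfin]

theorem IsNegDefOn.map {f : F → ℝ} {g : E →ₗ[ℝ] F} {W : Submodule ℝ E}
    (hW : IsNegDefOn (fun x => f (g x)) W) : IsNegDefOn f (W.map g) := by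
  rintro _ ⟨x, hx, rfl⟩ hgx
  exact hW x hx fun hx0 => hgx (by rw [hx0, map_zero])

theorem IsNegDefOn.finrank_map {f : F → ℝ} (hf0 : f 0 = 0) {g : E →ₗ[ℝ] F}
    {W : Submodule ℝ E} (hW : IsNegDefOn (fun x => f (g x)) W) :
    finrank ℝ (W.map g) = finrank ℝ W := by
  have hinj : Function.Injective (g.domRestrict W) := by
    rw [← LinearMap.ker_eq_bot, LinearMap.ker_eq_bot']
    intro x hgx
    by_contra hx0
    have hneg : f (g x) < 0 := hW x x.2 fun h => hx0 (Subtype.ext h)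
    rw [show g x = 0 from hgx, hf0] at hneg
    exact lt_irrefl 0 hneg
  rw [← LinearMap.range_domRestrict, LinearMap.finrank_range_of_inj hinj]

theorem IsNegSig.finrank_le_of_comp {f : F → ℝ} {n : ℕ} (h : IsNegSig f n) (hf0 : f 0 = 0)
    {g : E →ₗ[ℝ] F} {W : Submodule ℝ E} (hW : IsNegDefOn (fun x => f (g x)) W) :
    finrank ℝ W ≤ n :=
  hW.finrank_map hf0 ▸ h.finrank_le hW.map

theorem IsNegSig.of_comp_surjective {f : F → ℝ} (hf0 : f 0 = 0) {g : E →ₗ[ℝ] F}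
    (hg : Function.Surjective g) {n : ℕ} (h : IsNegSig (fun x => f (g x)) n) :
    IsNegSig f n := by
  obtain ⟨s, hs⟩ := g.exists_rightInverse_of_surjective (LinearMap.range_eq_top.2 hg)
  have hgs : ∀ y, g (s y) = y := fun y => LinearMap.congr_fun hs y
  refine ⟨?_, ?_⟩
  · obtain ⟨W, hWn, hW : IsNegDefOn _ W⟩ := h.1
    exact ⟨W.map g, (hW.finrank_map hf0).trans hWn, hW.map⟩
  · rintro k ⟨W, rfl, hW⟩
    have hW' : IsNegDefOn (fun y => f (g (s y))) W := fun y hy hy0 => by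
      simpa only [hgs] using hW y hy hy0
    exact h.finrank_le_of_comp (by simpa using hf0) hW'

end NegativeIndex

namespace LinearMap.BilinForm

variable {E : Type*} [AddCommGroup E] [Module ℝ E] {b : LinearMap.BilinForm ℝ E}

theorem apply_add_self_of_apply_eq_zero (hb : b.IsSymm) {x y : E} (hxy : b x y = 0) :
    b (x + y) (x + y) = b x x + b y y := by
  have hyx : b y x = 0 := by rw [← hb.eq]; exact hxy
  simp only [map_add, LinearMap.add_apply, hxy, hyx, add_zero, zero_add]

theorem apply_self_eq_sum_of_isOrthoᵢ {ι : Type*} {v : Basis ι ℝ E} (hv : b.IsOrthoᵢ v)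
    (w : E) : b w w = (v.repr w).sum fun i c => c ^ 2 * b (v i) (v i) := by
  rw [← LinearMap.sum_repr_mul_repr_mul v v (B := b) w w]
  refine Finsupp.sum_congr fun i _ => ?_
  rw [Finsupp.sum, Finset.sum_eq_single i]
  · simp only [smul_eq_mul]; ring
  · intro j _ hji
    rw [hv hji.symm, smul_zero, smul_zero]
  · intro hi
    rw [Finsupp.notMem_support_iff.1 hi]
    simp

theorem exists_isCompl_isNegDefOn_nonneg [FiniteDimensional ℝ E] (hb : b.IsSymm) :
    ∃ X Y : Submodule ℝ E, IsCompl X Y ∧ IsNegDefOn (fun v => b v v) X ∧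
      ∀ y ∈ Y, 0 ≤ b y y := by
  obtain ⟨v, hv⟩ := exists_orthogonal_basis (isSymm_iff.1 hb)
  set S := {i | b (v i) (v i) < 0}
  refine ⟨Submodule.span ℝ (v '' S), Submodule.span ℝ (v '' Sᶜ),
    v.linearIndependent.isCompl_span_image v.span_eq isCompl_compl, ?_, ?_⟩
  · intro w hw hw0
    have hsupp := v.mem_span_image.1 hw
    show b w w < 0
    rw [apply_self_eq_sum_of_isOrthoᵢ hv]
    refine Finset.sum_neg (fun i hi => ?_) (by simpa using hw0)
    exact mul_neg_of_pos_of_neg (pow_two_pos_of_ne_zero (Finsupp.mem_support_iff.1 hi))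
      (hsupp hi)
  · intro w hw
    have hsupp := v.mem_span_image.1 hw
    rw [apply_self_eq_sum_of_isOrthoᵢ hv]
    exact Finset.sum_nonneg fun i hi => mul_nonneg (sq_nonneg _) (not_lt.1 (hsupp hi))

theorem apply_self_eq_add_of_isCompl (hb : b.IsSymm) {V₁ V₂ : Submodule ℝ E}
    (hc : IsCompl V₁ V₂) (hV : V₁ ≤ b.orthogonal V₂) (v : E) :
    b v v = b (V₁.projectionOnto V₂ hc v) (V₁.projectionOnto V₂ hc v) +
      b (V₂.projectionOnto V₁ hc.symm v) (V₂.projectionOnto V₁ hc.symm v) := by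
  have hortho : b (V₁.projectionOnto V₂ hc v) (V₂.projectionOnto V₁ hc.symm v) = 0 :=
    (hb.eq _ _).trans (mem_orthogonal_iff.1 (hV (SetLike.coe_mem _)) _ (SetLike.coe_mem _))
  rw [← apply_add_self_of_apply_eq_zero hb hortho]
  congr 2 <;> exact (Submodule.projection_add_projection_eq_self hc v).symm

end LinearMap.BilinForm

section Additivity

variable {E : Type*} [AddCommGroup E] [Module ℝ E] {b : LinearMap.BilinForm ℝ E}

theorem IsNegDefOn.sup_of_le_orthogonal (hb : b.IsSymm) {X Y : Submodule ℝ E}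
    (hX : IsNegDefOn (fun v => b v v) X) (hY : IsNegDefOn (fun v => b v v) Y)
    (hXY : X ≤ b.orthogonal Y) : IsNegDefOn (fun v => b v v) (X ⊔ Y) := by
  rintro _ hv hv0
  obtain ⟨x, hx, y, hy, rfl⟩ := Submodule.mem_sup.1 hv
  have hxy : b x y = 0 := (hb.eq x y).trans ((mem_orthogonal_iff.1 (hXY hx)) y hy)
  show b (x + y) (x + y) < 0
  rw [apply_add_self_of_apply_eq_zero hb hxy]
  rcases eq_or_ne x 0 with rfl | hx0
  · rw [zero_add] at hv0
    simpa using hY y hy hv0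
  · have hyle : b y y ≤ 0 := by
      rcases eq_or_ne y 0 with rfl | hy0
      · simp
      · exact (hY y hy hy0).le
    linarith [hX x hx hx0]

variable {V₁ V₂ : Submodule ℝ E} {n₁ n₂ : ℕ}

/-- Diagonalising the `V₁`-part of `b` on `W` splits `W` into a piece that the projection onto
`V₁` embeds as a negative subspace, and a piece on which that part is nonnegative, so that the
projection onto `V₂` embeds it as a negative subspace. -/
theorem finrank_le_add_of_isCompl (hb : b.IsSymm) (hc : IsCompl V₁ V₂)
    (hV : V₁ ≤ b.orthogonal V₂) (h₁ : IsNegSig (fun u : V₁ => b u u) n₁)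
    (h₂ : IsNegSig (fun u : V₂ => b u u) n₂) {W : Submodule ℝ E}
    (hW : IsNegDefOn (fun v => b v v) W) : finrank ℝ W ≤ n₁ + n₂ := by
  by_cases hfin : FiniteDimensional ℝ W
  swap
  · rw [finrank_of_not_finite hfin]; exact Nat.zero_le _
  set p₁ := V₁.projectionOnto V₂ hc ∘ₗ W.subtype
  set p₂ := V₂.projectionOnto V₁ hc.symm ∘ₗ W.subtype
  let β : LinearMap.BilinForm ℝ W := b.compl₁₂ (V₁.subtype ∘ₗ p₁) (V₁.subtype ∘ₗ p₁)
  obtain ⟨X, Y, hXY, hX, hY⟩ := exists_isCompl_isNegDefOn_nonneg (b := β) ⟨fun _ _ => hb.eq _ _⟩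
  have hY₂ : IsNegDefOn (fun w => b (p₂ w) (p₂ w)) Y := fun y hy hy0 => by
    have hneg : b y y < 0 := hW y y.2 (by simpa using hy0)
    have hβ : 0 ≤ b (p₁ y) (p₁ y) := hY y hy
    have hsplit : b y y = b (p₁ y) (p₁ y) + b (p₂ y) (p₂ y) :=
      apply_self_eq_add_of_isCompl hb hc hV y
    show b (p₂ y) (p₂ y) < 0
    linarith
  calc finrank ℝ W = finrank ℝ X + finrank ℝ Y := (Submodule.finrank_add_eq_of_isCompl hXY).symm
    _ ≤ n₁ + n₂ := add_le_add (h₁.finrank_le_of_comp (by simp) hX)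
        (h₂.finrank_le_of_comp (by simp) hY₂)

theorem isNegSig_add_of_isCompl (hb : b.IsSymm) (hc : IsCompl V₁ V₂)
    (hV : V₁ ≤ b.orthogonal V₂) (h₁ : IsNegSig (fun u : V₁ => b u u) n₁)
    (h₂ : IsNegSig (fun u : V₂ => b u u) n₂) : IsNegSig (fun v => b v v) (n₁ + n₂) := by
  refine ⟨?_, fun k ⟨W, hWk, hW⟩ => hWk ▸ finrank_le_add_of_isCompl hb hc hV h₁ h₂ hW⟩
  obtain ⟨W₁, _, hW₁n, hW₁⟩ := h₁.exists_finiteDimensional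
  obtain ⟨W₂, _, hW₂n, hW₂⟩ := h₂.exists_finiteDimensional
  have hle₁ := Submodule.map_subtype_le V₁ W₁
  have hle₂ := Submodule.map_subtype_le V₂ W₂
  refine ⟨W₁.map V₁.subtype ⊔ W₂.map V₂.subtype, ?_,
    hW₁.map.sup_of_le_orthogonal hb hW₂.map (hle₁.trans (hV.trans (orthogonal_le hle₂)))⟩
  rw [← add_zero (finrank ℝ _), ← finrank_bot ℝ E, ← (hc.disjoint.mono hle₁ hle₂).eq_bot,
    Submodule.finrank_sup_add_finrank_inf_eq, Submodule.finrank_map_subtype_eq,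
    Submodule.finrank_map_subtype_eq, hW₁n, hW₂n]

end Additivity

theorem psz_signature_additivity_general
    {H : Type*} [NormedAddCommGroup H] [InnerProductSpace ℝ H] [CompleteSpace H]
    {m : ℕ}
    (A : H →L[ℝ] H) (hA : IsSelfAdjoint A)
    (V : Fin m → H)
    (C : Matrix (Fin m) (Fin m) ℝ)
    (hC : ∀ i j, C i j = - ⟪V j, A (V i)⟫)
    (T : Submodule ℝ H)
    (hsplit : IsCompl (Submodule.span ℝ (Set.range V)) T)
    (horth : ∀ U ∈ T, ∀ i, ⟪U, A (V i)⟫ = 0) :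
    ∀ n nT nC : ℕ,
      IsNegSig (fun U : H => ⟪A U, U⟫) n →
      IsNegSig (fun U : T => ⟪A U.1, U.1⟫) nT →
      IsNegSig (fun x : Fin m → ℝ => x ⬝ᵥ (-C).mulVec x) nC →
      n = nT + nC := by
  intro n nT nC hn hnT hnC
  let b : LinearMap.BilinForm ℝ H := (innerₗ H).compl₁₂ (A : H →ₗ[ℝ] H) LinearMap.id
  have hb : b.IsSymm := ⟨fun x y => (hA.isSymmetric x y).trans (real_inner_comm _ _)⟩
  let L := Fintype.linearCombination ℝ V
  have hgram : LinearMap.toMatrix₂' ℝ (b.compl₁₂ L L) = -C := by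
    ext i j
    simp [LinearMap.toMatrix₂'_apply, L, b, hC, real_inner_comm]
  have hform : (fun x : Fin m → ℝ => x ⬝ᵥ (-C) *ᵥ x) = fun x => b (L x) (L x) := by
    ext x
    rw [← hgram, ← Matrix.toLinearMap₂'_apply', Matrix.toLinearMap₂'_toMatrix']
    rfl
  have hspan : IsNegSig (fun u : LinearMap.range L => b u u) nC :=
    IsNegSig.of_comp_surjective (by simp) L.surjective_rangeRestrict (hform ▸ hnC)
  have hVT : LinearMap.range L ≤ b.orthogonal T := by
    rw [Fintype.range_linearCombination, Submodule.span_le]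
    rintro _ ⟨i, rfl⟩ U hU
    exact (hA.isSymmetric U (V i)).trans (horth U hU i)
  rw [← Fintype.range_linearCombination] at hsplit
  exact (hn.unique (isNegSig_add_of_isCompl hb hsplit hVT hspan hnT)).trans (add_comm _ _)

/-- abstract Pogan–Scheel–Zumbrun index lemma. With `A` self-adjoint,
directions `V i`, constraint functionals `φ i` with `T = ⋂ ker φ i`, Gram matrix
`C i j = −⟨V j, A V i⟩` invertible, `φ i (V j) = C i j`, `H = span(V) ⊕ T`, and `T`
`A`-orthogonal to the `V i`, one has `neg(A) = neg(A|_T) + neg(−C)`. -/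
theorem psz_signature_additivity
    {H : Type*} [NormedAddCommGroup H] [InnerProductSpace ℝ H] [CompleteSpace H]
    {m : ℕ}
    (A : H →L[ℝ] H) (hA : IsSelfAdjoint A)
    (V : Fin m → H) (φ : Fin m → (H →L[ℝ] ℝ))
    (C : Matrix (Fin m) (Fin m) ℝ)
    (hC : ∀ i j, C i j = - ⟪V j, A (V i)⟫)
    (hCinv : IsUnit C.det)
    (T : Submodule ℝ H) (hT : T = ⨅ i, LinearMap.ker (φ i : H →ₗ[ℝ] ℝ))
    (hφV : ∀ i j, φ i (V j) = C i j)
    (hsplit : IsCompl (Submodule.span ℝ (Set.range V)) T)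
    (horth : ∀ U ∈ T, ∀ i, ⟪U, A (V i)⟫ = 0) :
    ∀ n nT nC : ℕ,
      IsNegSig (fun U : H => ⟪A U, U⟫) n →
      IsNegSig (fun U : T => ⟪A U.1, U.1⟫) nT →
      IsNegSig (fun x : Fin m → ℝ => x ⬝ᵥ (-C).mulVec x) nC →
      n = nT + nC :=
  psz_signature_additivity_general A hA V C hC T hsplit horth
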